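/- Let U₀, V₀ > 0, let ι = ι(U₀,V₀) > 0 be the unique positive constant with 2U₀/V₀ = ι ∫₀^ι e^{(ι²−s²)/4} ds, and define U(x,t) := f^{(U₀,V₀)}(x/√t) for x ≥ 0 and t > 0. Then: (i) at every point (x,t) with t > 0 and 0 < x < ι√t, U is twice differentiable in x and once in t and satisfies the one-dimensional heat equation ∂_t U(x,t) = ∂_{xx} U(x,t); (ii) U(0,t) = U₀ for all t > 0; (iii) U(ι√t, t) = 0 for all t > 0; (iv) for every fixed x > 0, U(x,t) → 0 as t → 0⁺. -/

import Mathlib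

/-!
The primitive `E(η) = ∫₀^η e^{-s²/4} ds` (`gaussPrimitive`) satisfies `E'' = -(η/2) E'`, which
is exactly the condition for `g(x/√t)` to solve the heat equation: with `η = x/√t`, both `∂ₜ`
and `∂ₓₓ` of `g(x/√t)` equal `-(η/(2t)) g'(η)`. Below `ι` the profile is the affine image
`U₀ - (U₀/E(ι)) E`, normalised to take the values `U₀` at `0` and `0` at `ι`; above `ι` it
vanishes, and for fixed `x > 0` the argument `x/√t` tends to `+∞` as `t → 0⁺`.
-/

open Set Filter Real MeasureTheory Topology

noncomputable section

/-- The self-similar profile `f^{(U₀,V₀)}` associated with a constant `ι > 0`: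
`f(η) = U₀ (1 − (∫₀^η e^{−s²/4} ds)/(∫₀^ι e^{−s²/4} ds))` for `η ≤ ι`, and `0` for
`η > ι`. -/
def profile (U₀ ι η : ℝ) : ℝ :=
  if η ≤ ι then
    U₀ * (1 - (∫ s in (0:ℝ)..η, Real.exp (-s^2/4)) / (∫ s in (0:ℝ)..ι, Real.exp (-s^2/4)))
  else 0

def HeatEquationAt (U : ℝ → ℝ → ℝ) (x t : ℝ) : Prop :=
  DifferentiableAt ℝ (fun y => U y t) x ∧
  DifferentiableAt ℝ (deriv fun y => U y t) x ∧
  HasDerivAt (fun s => U x s) (deriv (deriv fun y => U y t) x) t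

theorem HeatEquationAt.congr_of_eventuallyEq {U V : ℝ → ℝ → ℝ} {x t : ℝ}
    (hV : HeatEquationAt V x t)
    (h : (fun p : ℝ × ℝ => U p.1 p.2) =ᶠ[𝓝 (x, t)] fun p => V p.1 p.2) :
    HeatEquationAt U x t := by
  have hx : (fun y => U y t) =ᶠ[𝓝 x] fun y => V y t :=
    h.comp_tendsto ((Continuous.prodMk_left t).tendsto x)
  have ht : (fun s => U x s) =ᶠ[𝓝 t] fun s => V x s :=
    h.comp_tendsto ((Continuous.prodMk_right x).tendsto t)
  obtain ⟨hV₁, hV₂, hV₃⟩ := hV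
  refine ⟨hx.differentiableAt_iff.mpr hV₁, hx.deriv.differentiableAt_iff.mpr hV₂, ?_⟩
  rw [hx.deriv.deriv_eq]
  exact hV₃.congr_of_eventuallyEq ht

section SelfSimilar

variable {g g' : ℝ → ℝ}

theorem hasDerivAt_comp_div_sqrt_left (hg : ∀ η, HasDerivAt g (g' η) η) (x t : ℝ) :
    HasDerivAt (fun y => g (y / √t)) (g' (x / √t) / √t) x :=
  ((hg (x / √t)).comp x ((hasDerivAt_id x).div_const √t)).congr_deriv (by ring)

theorem hasDerivAt_comp_div_sqrt_right (hg : ∀ η, HasDerivAt g (g' η) η) (x : ℝ) {t : ℝ}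
    (ht : 0 < t) :
    HasDerivAt (fun s => g (x / √s)) (-(x / (2 * t * √t)) * g' (x / √t)) t := by
  have hsqrt : HasDerivAt (fun s => x / √s) (-(x / (2 * t * √t))) t := by
    refine ((hasDerivAt_const t x).div (hasDerivAt_sqrt ht.ne')
      (sqrt_pos.mpr ht).ne').congr_deriv ?_
    rw [sq_sqrt ht.le]
    field_simp
    ring
  exact ((hg (x / √t)).comp t hsqrt).congr_deriv (by ring)

theorem heatEquationAt_comp_div_sqrt (hg : ∀ η, HasDerivAt g (g' η) η)
    (hg' : ∀ η, HasDerivAt g' (-(η / 2) * g' η) η) (x : ℝ) {t : ℝ} (ht : 0 < t) :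
    HeatEquationAt (fun y s => g (y / √s)) x t := by
  have hderiv : deriv (fun y => g (y / √t)) = fun y => g' (y / √t) / √t :=
    funext fun y => (hasDerivAt_comp_div_sqrt_left hg y t).deriv
  have hsecond : HasDerivAt (fun y => g' (y / √t) / √t)
      (-(x / (2 * t * √t)) * g' (x / √t)) x := by
    refine ((hasDerivAt_comp_div_sqrt_left hg' x t).div_const √t).congr_deriv ?_
    field_simp
    rw [sq_sqrt ht.le]
    ring
  refine ⟨(hasDerivAt_comp_div_sqrt_left hg x t).differentiableAt, ?_, ?_⟩
  · rw [hderiv]; exact hsecond.differentiableAt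
  · rw [hderiv, hsecond.deriv]; exact hasDerivAt_comp_div_sqrt_right hg x ht

end SelfSimilar

def gaussPrimitive (η : ℝ) : ℝ := ∫ s in (0:ℝ)..η, exp (-s ^ 2 / 4)

theorem hasDerivAt_gaussPrimitive (η : ℝ) :
    HasDerivAt gaussPrimitive (exp (-η ^ 2 / 4)) η :=
  have hcont : Continuous fun s : ℝ => exp (-s ^ 2 / 4) := by fun_prop
  intervalIntegral.integral_hasDerivAt_right (hcont.intervalIntegrable 0 η)
    hcont.aestronglyMeasurable.stronglyMeasurableAtFilter hcont.continuousAt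

theorem gaussPrimitive_pos {η : ℝ} (hη : 0 < η) : 0 < gaussPrimitive η :=
  intervalIntegral.intervalIntegral_pos_of_pos
    ((by fun_prop : Continuous fun s : ℝ => exp (-s ^ 2 / 4)).intervalIntegrable 0 η)
    (fun _ => exp_pos _) hη

theorem heatEquationAt_sub_mul_gaussPrimitive (a c x : ℝ) {t : ℝ} (ht : 0 < t) :
    HeatEquationAt (fun y s => a - c * gaussPrimitive (y / √s)) x t := by
  refine heatEquationAt_comp_div_sqrt (g' := fun η => -(c * exp (-η ^ 2 / 4)))
    (fun η => ((hasDerivAt_gaussPrimitive η).const_mul c).const_sub a) (fun η => ?_) x ht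
  refine (((((hasDerivAt_pow 2 η).fun_neg).div_const 4).exp).const_mul c).neg.congr_deriv ?_
  ring

theorem profile_of_le {U₀ ι η : ℝ} (h : η ≤ ι) :
    profile U₀ ι η = U₀ - U₀ / gaussPrimitive ι * gaussPrimitive η := by
  rw [profile, if_pos h, gaussPrimitive, gaussPrimitive]
  ring

theorem profile_of_lt {U₀ ι η : ℝ} (h : ι < η) : profile U₀ ι η = 0 :=
  if_neg h.not_ge

theorem profile_zero (U₀ : ℝ) {ι : ℝ} (hι : 0 ≤ ι) : profile U₀ ι 0 = U₀ := by
  simp [profile, hι]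

theorem profile_self (U₀ : ℝ) {ι : ℝ} (hι : 0 < ι) : profile U₀ ι ι = 0 := by
  rw [profile_of_le le_rfl, div_mul_cancel₀ _ (gaussPrimitive_pos hι).ne', sub_self]

theorem heatEquationAt_profile (U₀ ι : ℝ) {x t : ℝ} (ht : 0 < t) (hx : x < ι * √t) :
    HeatEquationAt (fun y s => profile U₀ ι (y / √s)) x t := by
  have hsqrt : 0 < √t := sqrt_pos.mpr ht
  have hbranch : profile U₀ ι =ᶠ[𝓝 (x / √t)]
      fun η => U₀ - U₀ / gaussPrimitive ι * gaussPrimitive η :=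
    (eventually_le_nhds ((div_lt_iff₀ hsqrt).mpr hx)).mono fun _ => profile_of_le
  have hcont : ContinuousAt (fun p : ℝ × ℝ => p.1 / √p.2) (x, t) :=
    continuousAt_fst.div (continuous_sqrt.continuousAt.comp continuousAt_snd) hsqrt.ne'
  exact (heatEquationAt_sub_mul_gaussPrimitive U₀ _ x ht).congr_of_eventuallyEq
    (hbranch.comp_tendsto hcont)

theorem tendsto_div_sqrt_nhdsGT_zero {x : ℝ} (hx : 0 < x) :
    Tendsto (fun t => x / √t) (𝓝[>] 0) atTop := by
  have hsqrt : Tendsto (fun t => √t) (𝓝[>] 0) (𝓝[>] 0) :=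
    tendsto_nhdsWithin_of_tendsto_nhds_of_eventually_within _
      ((continuous_sqrt.tendsto' 0 0 sqrt_zero).mono_left nhdsWithin_le_nhds)
      (eventually_nhdsWithin_of_forall fun _ ht => sqrt_pos.mpr ht)
  simpa [div_eq_mul_inv] using hsqrt.inv_tendsto_nhdsGT_zero.const_mul_atTop hx

theorem selfsimilar_solution_properties_general
    (U₀ ι : ℝ) (hι : 0 < ι) :
    -- (i) the heat equation in the region `0 < x < ι√t`
    (∀ t : ℝ, 0 < t → ∀ x : ℝ, 0 < x → x < ι * Real.sqrt t →
      DifferentiableAt ℝ (fun y => profile U₀ ι (y / Real.sqrt t)) x ∧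
      DifferentiableAt ℝ (deriv (fun y => profile U₀ ι (y / Real.sqrt t))) x ∧
      HasDerivAt (fun s => profile U₀ ι (x / Real.sqrt s))
        (deriv (deriv (fun y => profile U₀ ι (y / Real.sqrt t))) x) t) ∧
    -- (ii) `U(0,t) = U₀`
    (∀ t : ℝ, 0 < t → profile U₀ ι (0 / Real.sqrt t) = U₀) ∧
    -- (iii) `U(ι√t, t) = 0`
    (∀ t : ℝ, 0 < t → profile U₀ ι ((ι * Real.sqrt t) / Real.sqrt t) = 0) ∧
    -- (iv) `U(x, t) → 0` as `t → 0⁺` for fixed `x > 0`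
    (∀ x : ℝ, 0 < x →
      Tendsto (fun t => profile U₀ ι (x / Real.sqrt t)) (𝓝[>] 0) (𝓝 0)) := by
  refine ⟨fun t ht x _ hx => heatEquationAt_profile U₀ ι ht hx, fun t _ => ?_, fun t ht => ?_,
    fun x hx => ?_⟩
  · rw [zero_div, profile_zero U₀ hι.le]
  · rw [mul_div_cancel_right₀ ι (sqrt_pos.mpr ht).ne', profile_self U₀ hι]
  · have hvanish : profile U₀ ι =ᶠ[atTop] 0 :=
      (eventually_gt_atTop ι).mono fun _ => profile_of_lt
    exact tendsto_nhds_of_eventually_eq (hvanish.comp_tendsto (tendsto_div_sqrt_nhdsGT_zero hx))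

/-- **Lemma (the self-similar solution).**
With `ι = ι(U₀,V₀)` determined by `2U₀/V₀ = ι ∫₀^ι e^{(ι²−s²)/4} ds` and
`U(x,t) = f^{(U₀,V₀)}(x/√t)`:
(i) `U` is twice differentiable in `x`, once in `t`, and satisfies `∂ₜU = ∂ₓₓU` at
every point with `t > 0`, `0 < x < ι√t`;
(ii) `U(0,t) = U₀` for `t > 0`;
(iii) `U(ι√t, t) = 0` for `t > 0`;
(iv) `U(x,t) → 0` as `t → 0⁺`, for each fixed `x > 0`. -/
theorem selfsimilar_solution_properties
    (U₀ V₀ ι : ℝ) (hU₀ : 0 < U₀) (hV₀ : 0 < V₀) (hι : 0 < ι)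
    (hιeq : 2 * U₀ / V₀ = ι * ∫ s in (0:ℝ)..ι, Real.exp ((ι^2 - s^2)/4)) :
    -- (i) the heat equation in the region `0 < x < ι√t`
    (∀ t : ℝ, 0 < t → ∀ x : ℝ, 0 < x → x < ι * Real.sqrt t →
      DifferentiableAt ℝ (fun y => profile U₀ ι (y / Real.sqrt t)) x ∧
      DifferentiableAt ℝ (deriv (fun y => profile U₀ ι (y / Real.sqrt t))) x ∧
      HasDerivAt (fun s => profile U₀ ι (x / Real.sqrt s))
        (deriv (deriv (fun y => profile U₀ ι (y / Real.sqrt t))) x) t) ∧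
    -- (ii) `U(0,t) = U₀`
    (∀ t : ℝ, 0 < t → profile U₀ ι (0 / Real.sqrt t) = U₀) ∧
    -- (iii) `U(ι√t, t) = 0`
    (∀ t : ℝ, 0 < t → profile U₀ ι ((ι * Real.sqrt t) / Real.sqrt t) = 0) ∧
    -- (iv) `U(x, t) → 0` as `t → 0⁺` for fixed `x > 0`
    (∀ x : ℝ, 0 < x →
      Tendsto (fun t => profile U₀ ι (x / Real.sqrt t)) (𝓝[>] 0) (𝓝 0)) :=
  selfsimilar_solution_properties_general U₀ ι hι
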